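/- Convergence of projected approximate dual ascent: under the recursion ‖μ⁽ᵗ⁾ − μ*‖² ≤ ‖μ⁽ᵗ⁻¹⁾ − μ*‖² + 2η Δ_t with Δ_t = d(μ⁽ᵗ⁻¹⁾) − D* + ρ + (η/2)S ≤ 0 whenever d(μ⁽ᵗ⁻¹⁾) ≤ D* − ρ − (η/2)S, for any β > 0 the first time T with d(μ⁽ᵀ⁻¹⁾) > D* − ρ − (η/2)S − β satisfies T ≤ ‖μ⁽⁰⁾ − μ*‖²/(2ηβ) + 1. -/
import Mathlib


/-- Convergence of projected approximate dual ascent: the first time T at which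
the gap d(μ⁽ᵀ⁻¹⁾) − D* + ρ + (η/2)S exceeds −β satisfies
T ≤ ‖μ⁽⁰⁾ − μ*‖²/(2ηβ) + 1. -/
theorem dual_ascent_convergence {m : ℕ}
    (d : EuclideanSpace ℝ (Fin m) → ℝ) (Dstar ρ S η β : ℝ)
    (μstar : EuclideanSpace ℝ (Fin m)) (μ : ℕ → EuclideanSpace ℝ (Fin m))
    (hη : 0 < η) (hβ : 0 < β) (hρ : 0 ≤ ρ) (hS : 0 ≤ S)
    (hmax : ∀ ν, d ν ≤ Dstar) (hDstar : d μstar = Dstar) (hμstar : ∀ i, 0 ≤ μstar i)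
    (hrec : ∀ t : ℕ, ‖μ (t + 1) - μstar‖ ^ 2 ≤
      ‖μ t - μstar‖ ^ 2 + 2 * η * (d (μ t) - Dstar + ρ) + η ^ 2 * S)
    (T : ℕ)
    (hbefore : ∀ t : ℕ, t + 1 < T → d (μ t) - Dstar + ρ + (η / 2) * S ≤ -β) :
    (T : ℝ) ≤ ‖μ 0 - μstar‖ ^ 2 / (2 * η * β) + 1 := by
  have key : ∀ t : ℕ, t < T →
      ‖μ t - μstar‖ ^ 2 ≤ ‖μ 0 - μstar‖ ^ 2 - 2 * η * β * t := by
    intro t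
    induction t with
    | zero => intro _; simp
    | succ n ih =>
      intro h
      have hn : n < T := Nat.lt_of_succ_lt h
      have h1 := ih hn
      have h2 := hrec n
      have h3 := hbefore n h
      push_cast
      nlinarith [hη.le, hβ.le]
  rcases Nat.eq_zero_or_pos T with h0 | hT
  · subst h0
    have h1 : (0:ℝ) ≤ ‖μ 0 - μstar‖ ^ 2 := sq_nonneg _
    have h2 : (0:ℝ) < 2 * η * β := by positivity
    push_cast
    nlinarith [div_nonneg h1 h2.le]
  · have h1 := key (T - 1) (Nat.sub_lt hT one_pos)
    have h2 : (0:ℝ) ≤ ‖μ (T - 1) - μstar‖ ^ 2 := sq_nonneg _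
    have hc : ((T - 1 : ℕ) : ℝ) = (T:ℝ) - 1 := by
      push_cast [Nat.cast_sub hT]
      ring
    rw [hc] at h1
    have h3 : 2 * η * β * ((T:ℝ) - 1) ≤ ‖μ 0 - μstar‖ ^ 2 := by linarith
    have h4 : (0:ℝ) < 2 * η * β := by positivity
    rw [← sub_le_iff_le_add]
    rw [le_div_iff₀ h4]
    nlinarith
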